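/- Let n, N ≥ 1 and let α : Fin N → ℤⁿ be weights which generate ℤⁿ as an additive group, with the zero vector of ℝⁿ in the intrinsic (relative) interior of the convex hull of {α₁, …, α_N} in ℝⁿ. Define ρ : ℂᴺ → ℝⁿ by ρ_j(z) = Σ_{i=1}^{N} α_i(j)·|z_i|², and let Z = ρ^{-1}(0). Then the set of points z ∈ Z at which the real Fréchet derivative of ρ (as a map of real vector spaces ℂᴺ ≅ ℝ^{2N} → ℝⁿ) is surjective is open and dense in Z (with its subspace topology). -/

import Mathlib

/-!
Writing `ρ(z) = ∑ᵢ |zᵢ|² αᵢ`, the derivative of `ρ` at `z` has image the span of the weights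
`αᵢ` with `zᵢ ≠ 0`. Surjectivity is therefore a condition on the support of `z`, which can
only grow under small perturbations, so it holds on an open set. Since `0` lies in the relative interior of the
convex hull of the weights, there are `cᵢ > 0` with `∑ᵢ cᵢ αᵢ = 0`; enlarging each `|zᵢ|²` by
`t cᵢ` keeps `z` in `ρ⁻¹(0)`, makes every coordinate nonzero and moves `z` by at most
`√(t max cᵢ)`. With full support the image is the span of all the weights, which is everything
because they generate `ℤⁿ`.
-/

/-- The moment map `ρ : ℂᴺ → ℝⁿ`, `ρ_j(z) = Σ_i α_i(j)·|z_i|²`, of a unitary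
torus action on `ℂᴺ` with weights `α`. -/
noncomputable def torusRealMomentMap (n N : ℕ) (α : Fin N → (Fin n → ℤ))
    (z : Fin N → ℂ) : Fin n → ℝ :=
  fun j => ∑ i, (α i j : ℝ) * ‖z i‖ ^ 2

open Set Filter Topology Function

section Convex

variable {ι E : Type*} [Fintype ι] [NormedAddCommGroup E] [NormedSpace ℝ E]

theorem convexHull_range_eq_image_stdSimplex (v : ι → E) :
    convexHull ℝ (range v) = Fintype.linearCombination ℝ v '' stdSimplex ℝ ι := by
  classical
  rw [← convexHull_rangle_single_eq_stdSimplex, LinearMap.image_convexHull, ← range_comp]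
  simp [comp_def, Fintype.linearCombination_apply_single]

omit [Fintype ι] in
theorem eventually_smul_add_mem_of_mem_intrinsicInterior {s : Set E} {x v : E}
    (hx : x ∈ intrinsicInterior ℝ s) (hv : v ∈ (affineSpan ℝ s).direction) :
    ∀ᶠ t in 𝓝 (0 : ℝ), t • v + x ∈ s := by
  obtain ⟨y, hy, rfl⟩ := mem_intrinsicInterior.1 hx
  let f : ℝ → affineSpan ℝ s := fun t =>
    ⟨t • v + y, AffineSubspace.vadd_mem_of_mem_direction (Submodule.smul_mem _ t hv) y.2⟩
  have hf : Continuous f := by fun_prop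
  have hf0 : f 0 = y := by simp [f]
  have := hf.continuousAt.preimage_mem_nhds (hf0 ▸ isOpen_interior.mem_nhds hy)
  exact mem_of_superset this fun t ht => (interior_subset ht : f t ∈ (↑) ⁻¹' s)

theorem exists_pos_sum_smul_eq_zero_of_zero_mem_intrinsicInterior {β : ι → E}
    (h : 0 ∈ intrinsicInterior ℝ (convexHull ℝ (range β))) :
    ∃ c : ι → ℝ, (∀ i, 0 < c i) ∧ ∑ i, c i • β i = 0 := by
  have hv : -∑ i, β i ∈ (affineSpan ℝ (convexHull ℝ (range β))).direction := by
    rw [direction_affineSpan]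
    refine neg_mem (sum_mem fun i _ => ?_)
    simpa using vsub_mem_vectorSpan ℝ (subset_convexHull ℝ (range β) ⟨i, rfl⟩)
      (intrinsicInterior_subset h)
  -- `-ε ∑ᵢ βᵢ` is still in the hull for small `ε > 0`; adding `ε` to its barycentric weights
  -- makes them positive.
  obtain ⟨ε, hεs, hε⟩ := ((eventually_nhdsWithin_of_eventually_nhds
    (eventually_smul_add_mem_of_mem_intrinsicInterior h hv)).and
      (eventually_mem_nhdsWithin (s := Ioi 0))).exists
  rw [add_zero, convexHull_range_eq_image_stdSimplex] at hεs
  obtain ⟨w, ⟨hw0, -⟩, hw⟩ := hεs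
  rw [Fintype.linearCombination_apply] at hw
  refine ⟨fun i => w i + ε, fun i => add_pos_of_nonneg_of_pos (hw0 i) hε, ?_⟩
  simp only [add_smul, Finset.sum_add_distrib, ← Finset.smul_sum]
  rw [hw, smul_neg, neg_add_cancel]

end Convex

theorem span_intCast_range_eq_top {ι κ : Type*} [Finite κ] {α : ι → κ → ℤ}
    (h : AddSubgroup.closure (range α) = ⊤) :
    Submodule.span ℝ (range fun i j => (α i j : ℝ)) = ⊤ := by
  have hcast : ∀ x : κ → ℤ,
      (fun j => (x j : ℝ)) ∈ Submodule.span ℝ (range fun i j => (α i j : ℝ)) := by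
    have : AddSubgroup.closure (range α) ≤
        (Submodule.span ℝ (range fun i j => (α i j : ℝ))).toAddSubgroup.comap
          ((Int.castAddHom ℝ).compLeft κ) :=
      (AddSubgroup.closure_le _).2 (by rintro _ ⟨i, rfl⟩; exact Submodule.subset_span ⟨i, rfl⟩)
    exact fun x => this (h ▸ AddSubgroup.mem_top x)
  classical
  rw [eq_top_iff, ← (Pi.basisFun ℝ κ).span_eq, Submodule.span_le]
  rintro _ ⟨j, rfl⟩
  have hj : (fun k => ((Pi.single j 1 : κ → ℤ) k : ℝ)) = Pi.basisFun ℝ κ j := by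
    ext k
    simp [Pi.single_apply]
  exact hj ▸ hcast _

theorem exists_norm_sq_eq_add_dist_le_sqrt {F : Type*} [NormedAddCommGroup F] [NormedSpace ℝ F]
    [Nontrivial F] (x : F) {s : ℝ} (hs : 0 ≤ s) :
    ∃ y : F, ‖y‖ ^ 2 = ‖x‖ ^ 2 + s ∧ dist y x ≤ √s := by
  obtain ⟨u, hu, hxu⟩ : ∃ u : F, ‖u‖ = 1 ∧ ‖x‖ • u = x := by
    rcases eq_or_ne x 0 with rfl | hx
    · obtain ⟨u, hu⟩ := exists_norm_eq F zero_le_one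
      exact ⟨u, hu, by simp⟩
    · exact ⟨‖x‖⁻¹ • x, norm_smul_inv_norm hx, smul_inv_smul₀ (norm_ne_zero_iff.2 hx) x⟩
  have hr : 0 ≤ ‖x‖ ^ 2 + s := by positivity
  refine ⟨√(‖x‖ ^ 2 + s) • u, ?_, ?_⟩
  · rw [norm_smul, hu, mul_one, Real.norm_of_nonneg (Real.sqrt_nonneg _), Real.sq_sqrt hr]
  · have hsub : √(‖x‖ ^ 2 + s) • u - x = (√(‖x‖ ^ 2 + s) - ‖x‖) • u := by rw [sub_smul, hxu]
    have hlow : ‖x‖ ≤ √(‖x‖ ^ 2 + s) := Real.le_sqrt_of_sq_le (by linarith)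
    have hup : √(‖x‖ ^ 2 + s) ≤ ‖x‖ + √s := by
      rw [Real.sqrt_le_left (by positivity)]
      nlinarith [Real.sq_sqrt hs, Real.sqrt_nonneg s, norm_nonneg x]
    rw [dist_eq_norm, hsub, norm_smul, hu, mul_one, Real.norm_eq_abs, abs_le]
    constructor <;> linarith [Real.sqrt_nonneg s]

theorem eventually_support_subset {ι F : Type*} [Finite ι] [TopologicalSpace F] [T1Space F]
    [Zero F] (z : ι → F) : ∀ᶠ w in 𝓝 z, support z ⊆ support w :=
  (eventually_all_finite (toFinite _)).2 fun i hi =>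
    (continuous_apply i).continuousAt.eventually_ne hi

theorem isOpen_setOf_span_image_support_eq_top {ι R M F : Type*} [Finite ι] [Semiring R]
    [AddCommMonoid M] [Module R M] [TopologicalSpace F] [T1Space F] [Zero F] (β : ι → M) :
    IsOpen {z : ι → F | Submodule.span R (β '' support z) = ⊤} :=
  isOpen_iff_mem_nhds.2 fun z hz => (eventually_support_subset z).mono fun _ hw =>
    eq_top_iff.2 (hz ▸ Submodule.span_mono (image_mono hw))

section NormSqCombination

variable {ι E F : Type*} [Fintype ι] [NormedAddCommGroup E] [NormedSpace ℝ E]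
  [NormedAddCommGroup F]

def normSqCombination (β : ι → E) (z : ι → F) : E := ∑ i, ‖z i‖ ^ 2 • β i

variable (β : ι → E)

section Deriv

variable [InnerProductSpace ℝ F] (z : ι → F)

theorem hasFDerivAt_normSqCombination :
    HasFDerivAt (normSqCombination β)
      (∑ i, (2 • (innerSL ℝ (z i)).comp (ContinuousLinearMap.proj i)).smulRight (β i)) z :=
  HasFDerivAt.fun_sum fun i _ => ((hasFDerivAt_apply i z).norm_sq).smul_const (β i)

theorem fderiv_normSqCombination_apply (v : ι → F) :
    fderiv ℝ (normSqCombination β) z v = ∑ i, (2 * inner ℝ (z i) (v i)) • β i := by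
  simp [(hasFDerivAt_normSqCombination β z).fderiv]

theorem range_fderiv_normSqCombination :
    LinearMap.range (fderiv ℝ (normSqCombination β) z : (ι → F) →ₗ[ℝ] E) =
      Submodule.span ℝ (β '' support z) := by
  classical
  apply le_antisymm
  · rintro _ ⟨v, rfl⟩
    rw [ContinuousLinearMap.coe_coe, fderiv_normSqCombination_apply]
    refine Submodule.sum_mem _ fun i _ => ?_
    by_cases hz : z i = 0
    · simp [hz]
    · exact Submodule.smul_mem _ _ (Submodule.subset_span ⟨i, hz, rfl⟩)
  · rw [Submodule.span_le]
    rintro _ ⟨i, hz, rfl⟩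
    refine ⟨(2 * ‖z i‖ ^ 2)⁻¹ • Pi.single i (z i), ?_⟩
    have hz' : (2 * ‖z i‖ ^ 2) ≠ 0 := by simpa using hz
    rw [map_smul, ContinuousLinearMap.coe_coe, fderiv_normSqCombination_apply,
      Finset.sum_eq_single i (fun k _ hk => by simp [hk]) (by simp), Pi.single_eq_same,
      real_inner_self_eq_norm_sq, smul_smul, inv_mul_cancel₀ hz', one_smul]

theorem surjective_fderiv_normSqCombination_iff :
    Surjective (fderiv ℝ (normSqCombination β) z) ↔ Submodule.span ℝ (β '' support z) = ⊤ := by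
  rw [← range_fderiv_normSqCombination, LinearMap.range_eq_top, ContinuousLinearMap.coe_coe]

end Deriv

theorem normSqCombination_preimage_subset_closure_forall_ne_zero [NormedSpace ℝ F] [Nontrivial F]
    {c : ι → ℝ} (hc : ∀ i, 0 < c i) (hcβ : ∑ i, c i • β i = 0) (x : E) :
    normSqCombination β ⁻¹' {x} ⊆
      closure (normSqCombination β ⁻¹' {x} ∩ {z : ι → F | ∀ i, z i ≠ 0}) := by
  intro z hz
  rw [Metric.mem_closure_iff]
  intro ε hε
  have hsmall : ∀ᶠ t in 𝓝[>] (0 : ℝ), 0 < t ∧ ∀ i, t * c i < ε ^ 2 := by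
    refine eventually_mem_nhdsWithin.and (eventually_nhdsWithin_of_eventually_nhds ?_)
    exact eventually_all.2 fun i => (continuous_mul_const (c i)).continuousAt.eventually_lt
      continuousAt_const (by simpa using pow_pos hε 2)
  obtain ⟨t, ht, htc⟩ := hsmall.exists
  choose w hw using fun i => exists_norm_sq_eq_add_dist_le_sqrt (z i) (mul_pos ht (hc i)).le
  refine ⟨w, ⟨?_, fun i hwi => ?_⟩, ?_⟩
  · calc normSqCombination β w
        = ∑ i, ‖z i‖ ^ 2 • β i + t • ∑ i, c i • β i := by
          simp only [normSqCombination, (hw _).1, add_smul, Finset.sum_add_distrib,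
            Finset.smul_sum, smul_smul]
      _ = x := by rw [hcβ, smul_zero, add_zero]; exact hz
  · have := (hw i).1
    rw [hwi, norm_zero] at this
    nlinarith [sq_nonneg ‖z i‖, mul_pos ht (hc i)]
  · rw [dist_comm, dist_pi_lt_iff hε]
    exact fun i => (hw i).2.trans_lt ((Real.sqrt_lt' hε).2 (htc i))

end NormSqCombination

theorem torus_kempfNess_surjective_deriv_openDense_general
    (n N : ℕ)
    (α : Fin N → (Fin n → ℤ))
    (hfaithful : AddSubgroup.closure (Set.range α) = (⊤ : AddSubgroup (Fin n → ℤ)))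
    (hstable : (0 : EuclideanSpace ℝ (Fin n)) ∈
      intrinsicInterior ℝ (convexHull ℝ
        (Set.range fun i => (WithLp.toLp 2 (fun j => (α i j : ℝ)) : EuclideanSpace ℝ (Fin n))))) :
    IsOpen { z : {z : Fin N → ℂ | torusRealMomentMap n N α z = 0} |
        Function.Surjective (fderiv ℝ (torusRealMomentMap n N α) (z : Fin N → ℂ)) } ∧
    Dense { z : {z : Fin N → ℂ | torusRealMomentMap n N α z = 0} |
        Function.Surjective (fderiv ℝ (torusRealMomentMap n N α) (z : Fin N → ℂ)) } := by
  set β : Fin N → Fin n → ℝ := fun i j => (α i j : ℝ)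
  have hρ : torusRealMomentMap n N α = normSqCombination β := by
    ext z j
    simp [torusRealMomentMap, normSqCombination, β, mul_comm]
  have hgood : { z : {z : Fin N → ℂ | torusRealMomentMap n N α z = 0} |
      Surjective (fderiv ℝ (torusRealMomentMap n N α) (z : Fin N → ℂ)) } =
        Subtype.val ⁻¹' {z | Submodule.span ℝ (β '' support z) = ⊤} := by
    ext z
    simp only [mem_ofPred_eq, mem_preimage, hρ, surjective_fderiv_normSqCombination_iff]
  rw [hgood]
  refine ⟨(isOpen_setOf_span_image_support_eq_top β).preimage continuous_subtype_val,
    Subtype.dense_iff.2 ?_⟩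
  rw [Subtype.image_preimage_coe]
  obtain ⟨c, hc, hcβ⟩ := exists_pos_sum_smul_eq_zero_of_zero_mem_intrinsicInterior hstable
  replace hcβ : ∑ i, c i • β i = 0 := by simpa using congrArg WithLp.ofLp hcβ
  rw [hρ]
  refine (normSqCombination_preimage_subset_closure_forall_ne_zero β hc hcβ 0).trans
    (closure_mono (inter_subset_inter_right _ fun z hz => ?_))
  have hsupp : support z = univ := eq_univ_of_forall hz
  rw [mem_ofPred_eq, hsupp, image_univ]
  exact span_intCast_range_eq_top hfaithful

/-- Proposition 4.1 for faithful stable torus modules: the points of the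
Kempf–Ness set `Z = ρ⁻¹(0)` where the (real) derivative of `ρ` is surjective
form an open dense subset of `Z`. -/
theorem torus_kempfNess_surjective_deriv_openDense
    (n N : ℕ) (hn : 1 ≤ n) (hN : 1 ≤ N)
    (α : Fin N → (Fin n → ℤ))
    (hfaithful : AddSubgroup.closure (Set.range α) = (⊤ : AddSubgroup (Fin n → ℤ)))
    (hstable : (0 : EuclideanSpace ℝ (Fin n)) ∈
      intrinsicInterior ℝ (convexHull ℝ
        (Set.range fun i => (WithLp.toLp 2 (fun j => (α i j : ℝ)) : EuclideanSpace ℝ (Fin n))))) :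
    IsOpen { z : {z : Fin N → ℂ | torusRealMomentMap n N α z = 0} |
        Function.Surjective (fderiv ℝ (torusRealMomentMap n N α) (z : Fin N → ℂ)) } ∧
    Dense { z : {z : Fin N → ℂ | torusRealMomentMap n N α z = 0} |
        Function.Surjective (fderiv ℝ (torusRealMomentMap n N α) (z : Fin N → ℂ)) } :=
  torus_kempfNess_surjective_deriv_openDense_general n N α hfaithful hstable
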